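/- Suppose a nonnegative sequence (b_k) satisfies b_{k+1} ≤ (1 − 2K₀η_k + η_k B_k) b_k + η_k B_k + η_k² V_k for all k, where η_k, B_k, V_k ≥ 0, 0 < K₀ ≤ 1. If for all sufficiently large k: (1 + 1/k)^β ≤ 1 + (K₀/2)η_k, B_k ≤ (K₀/8)k^{−β}, η_k² V_k ≤ K₃ η_k k^{−β} for some K₃ > 0, η_k K₀ ≤ 1, and b₁ is finite, then there exists a constant K₂ > 0 such that b_k ≤ K₂ k^{−β} for all k ≥ 1. -/

import Mathlib

set_option maxHeartbeats 1000000 in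
/-- Key induction step in the SGD convergence rate analysis (Theorem 3, Appendix A.1):
a nonnegative sequence satisfying the biased-SGD recursion decays like k^(-β). -/
theorem sgd_recursion_rate (b η B V : ℕ → ℝ) (K₀ K₃ β : ℝ)
    (hK₀ : 0 < K₀) (hK₀1 : K₀ ≤ 1) (hK₃ : 0 < K₃) (hβ : 0 < β) (hβ1 : β ≤ 1)
    (hbnn : ∀ k, 0 ≤ b k) (hηnn : ∀ k, 0 ≤ η k) (hBnn : ∀ k, 0 ≤ B k)
    (hVnn : ∀ k, 0 ≤ V k)
    (hrec : ∀ k, 1 ≤ k →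
      b (k + 1) ≤ (1 - 2 * K₀ * η k + η k * B k) * b k + η k * B k + η k ^ 2 * V k)
    (hN : ∃ N : ℕ, ∀ k, N ≤ k →
      (1 + 1 / (k : ℝ)) ^ β ≤ 1 + (K₀ / 2) * η k ∧
      B k ≤ (K₀ / 8) * (k : ℝ) ^ (-β) ∧
      η k ^ 2 * V k ≤ K₃ * η k * (k : ℝ) ^ (-β) ∧
      η k * K₀ ≤ 1) :
    ∃ K₂ : ℝ, 0 < K₂ ∧ ∀ k : ℕ, 1 ≤ k → b k ≤ K₂ * (k : ℝ) ^ (-β) := by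
  obtain ⟨N, hNprop⟩ := hN
  set N' := max N 1 with hN'def
  set Cst : ℝ := 3/2 * (K₀/8 + K₃) / K₀ with hCstdef
  have hCstpos : 0 < Cst := by positivity
  set S : ℝ := ∑ j ∈ Finset.Icc 1 N', b j * (j:ℝ)^β with hSdef
  have hterm : ∀ j ∈ Finset.Icc 1 N', 0 ≤ b j * (j:ℝ)^β := by
    intro j _
    exact mul_nonneg (hbnn j) (Real.rpow_nonneg (Nat.cast_nonneg j) β)
  have hSnn : 0 ≤ S := Finset.sum_nonneg hterm
  set K₂ : ℝ := Cst + S with hK₂def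
  have hK₂pos : 0 < K₂ := by linarith
  refine ⟨K₂, hK₂pos, ?_⟩
  have hK₂C : Cst ≤ K₂ := by linarith
  have hK₂K₀ : 3/2 * (K₀/8 + K₃) ≤ K₂ * K₀ := by
    have : Cst * K₀ = 3/2 * (K₀/8 + K₃) := by
      rw [hCstdef, div_mul_cancel₀ _ hK₀.ne']
    nlinarith [hK₂C, hK₀]
  -- base cases
  have hbase : ∀ k, 1 ≤ k → k ≤ N' → b k ≤ K₂ * (k:ℝ)^(-β) := by
    intro k h1 h2
    have hk0 : (0:ℝ) < (k:ℝ) := by exact_mod_cast h1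
    have hkb : (0:ℝ) < (k:ℝ)^β := Real.rpow_pos_of_pos hk0 β
    have hmem : k ∈ Finset.Icc 1 N' := Finset.mem_Icc.mpr ⟨h1, h2⟩
    have h3 : b k * (k:ℝ)^β ≤ S :=
      Finset.single_le_sum hterm hmem
    have h4 : b k * (k:ℝ)^β ≤ K₂ := by linarith
    rw [Real.rpow_neg hk0.le, ← div_eq_mul_inv]
    exact (le_div_iff₀ hkb).mpr h4
  -- induction step
  have hstep : ∀ k, N' ≤ k → b k ≤ K₂ * (k:ℝ)^(-β) →
      b (k+1) ≤ K₂ * ((k:ℝ)+1)^(-β) := by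
    intro k hk ih
    have h1k : 1 ≤ k := le_trans (le_max_right N 1) hk
    obtain ⟨hη1, hB1, hV1, hηK⟩ := hNprop k (le_trans (le_max_left N 1) hk)
    have hk0 : (0:ℝ) < (k:ℝ) := by exact_mod_cast h1k
    have hk1 : (1:ℝ) ≤ (k:ℝ) := by exact_mod_cast h1k
    set x : ℝ := K₀ * η k with hxdef
    have hx0 : 0 ≤ x := mul_nonneg hK₀.le (hηnn k)
    have hx1 : x ≤ 1 := by rw [hxdef]; linarith [hηK, mul_comm (η k) K₀]
    have hkm1 : (k:ℝ)^(-β) ≤ 1 :=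
      Real.rpow_le_one_of_one_le_of_nonpos hk1 (by linarith)
    have hkmpos : 0 < (k:ℝ)^(-β) := Real.rpow_pos_of_pos hk0 (-β)
    have hk1pos : 0 < ((k:ℝ)+1)^(-β) := Real.rpow_pos_of_pos (by linarith) (-β)
    set C : ℝ := max (1 - 15/8*x) 0 with hCdef
    have hC0 : 0 ≤ C := le_max_right _ _
    -- coefficient bound
    have hcoef : 1 - 2*K₀*η k + η k * B k ≤ C := by
      refine le_trans ?_ (le_max_left _ _)
      have h5 : η k * B k ≤ η k * ((K₀/8) * (k:ℝ)^(-β)) :=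
        mul_le_mul_of_nonneg_left hB1 (hηnn k)
      have h6 : η k * ((K₀/8) * (k:ℝ)^(-β)) ≤ η k * (K₀/8) := by
        have := mul_le_mul_of_nonneg_left hkm1 (mul_nonneg (hηnn k) (by positivity : (0:ℝ) ≤ K₀/8))
        nlinarith [this]
      have hx' : 2*K₀*η k = 2*x := by rw [hxdef]; ring
      nlinarith [h5, h6]
    have hcb : (1 - 2*K₀*η k + η k * B k) * b k ≤ C * (K₂ * (k:ℝ)^(-β)) :=
      mul_le_mul hcoef ih (hbnn k) hC0
    have hηB : η k * B k ≤ K₀/8 * η k * (k:ℝ)^(-β) := by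
      calc η k * B k ≤ η k * (K₀/8 * (k:ℝ)^(-β)) :=
            mul_le_mul_of_nonneg_left hB1 (hηnn k)
        _ = K₀/8 * η k * (k:ℝ)^(-β) := by ring
    have hb1 : b (k+1) ≤ (C*K₂ + K₀/8*η k + K₃*η k) * (k:ℝ)^(-β) := by
      have hr := hrec k h1k
      have hV' : η k ^ 2 * V k ≤ K₃ * η k * (k:ℝ)^(-β) := hV1
      have hexp : (C*K₂ + K₀/8*η k + K₃*η k) * (k:ℝ)^(-β)
          = C*(K₂*(k:ℝ)^(-β)) + K₀/8*η k*(k:ℝ)^(-β) + K₃*η k*(k:ℝ)^(-β) := by ring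
      rw [hexp]
      exact le_trans hr (add_le_add (add_le_add hcb hηB) hV')
    -- rpow comparison
    have hdiv : ((k:ℝ)+1)^β ≤ (1 + x/2) * (k:ℝ)^β := by
      have e : (1 + 1/(k:ℝ)) = ((k:ℝ)+1)/(k:ℝ) := by field_simp
      have h7 := hη1
      rw [e, Real.div_rpow (by linarith) hk0.le] at h7
      have hkb : (0:ℝ) < (k:ℝ)^β := Real.rpow_pos_of_pos hk0 β
      have h8 := (div_le_iff₀ hkb).mp h7
      calc ((k:ℝ)+1)^β ≤ (1 + K₀/2 * η k) * (k:ℝ)^β := h8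
        _ = (1 + x/2) * (k:ℝ)^β := by rw [hxdef]; ring
    have hrp : (k:ℝ)^(-β) ≤ (1 + x/2) * ((k:ℝ)+1)^(-β) := by
      have hkb : (0:ℝ) < (k:ℝ)^β := Real.rpow_pos_of_pos hk0 β
      have hk1b : (0:ℝ) < ((k:ℝ)+1)^β := Real.rpow_pos_of_pos (by linarith) β
      rw [Real.rpow_neg hk0.le, Real.rpow_neg (by linarith : (0:ℝ) ≤ (k:ℝ)+1)]
      rw [← div_eq_mul_inv, le_div_iff₀ hk1b, inv_mul_eq_div, div_le_iff₀ hkb]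
      nlinarith [hdiv]
    -- algebraic core
    have halg : (C*K₂ + K₀/8*η k + K₃*η k) * (1 + x/2) ≤ K₂ := by
      have ht : K₀/8*η k + K₃*η k = (K₀/8 + K₃) * η k := by ring
      have htx : 3/2 * ((K₀/8 + K₃) * η k) ≤ K₂ * x := by
        rw [hxdef]
        nlinarith [mul_le_mul_of_nonneg_right hK₂K₀ (hηnn k)]
      have htnn : 0 ≤ (K₀/8 + K₃) * η k := mul_nonneg (by positivity) (hηnn k)
      rcases le_or_gt (1 - 15/8*x) 0 with hc | hc
      · have hC : C = 0 := max_eq_right hc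
        rw [hC]
        nlinarith [htx, hK₂pos, hx1, hx0, htnn]
      · have hC : C = 1 - 15/8*x := max_eq_left hc.le
        rw [hC]
        nlinarith [htx, hK₂pos, hx1, hx0, htnn, mul_nonneg (mul_nonneg hK₂pos.le hx0) hx0]
    have hEnn : 0 ≤ C*K₂ + K₀/8*η k + K₃*η k := by
      have := mul_nonneg hC0 hK₂pos.le
      have := mul_nonneg (hηnn k) hK₃.le
      nlinarith [hηnn k, hK₀.le]
    calc b (k+1) ≤ (C*K₂ + K₀/8*η k + K₃*η k) * (k:ℝ)^(-β) := hb1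
      _ ≤ (C*K₂ + K₀/8*η k + K₃*η k) * ((1 + x/2) * ((k:ℝ)+1)^(-β)) :=
          mul_le_mul_of_nonneg_left hrp hEnn
      _ = ((C*K₂ + K₀/8*η k + K₃*η k) * (1 + x/2)) * ((k:ℝ)+1)^(-β) := by ring
      _ ≤ K₂ * ((k:ℝ)+1)^(-β) := mul_le_mul_of_nonneg_right halg hk1pos.le
  -- combine
  intro k hk
  rcases le_total k N' with h | h
  · exact hbase k hk h
  · have : ∀ m, N' ≤ m → b m ≤ K₂ * (m:ℝ)^(-β) := by
      intro m hm
      induction m, hm using Nat.le_induction with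
      | base => exact hbase N' (le_max_right N 1) le_rfl
      | succ m hm ih =>
          have := hstep m hm ih
          push_cast
          convert this using 3
    exact this k h
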